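/- arXiv:1106.3241 — 3 statements merged into one kernel-verified Lean document; each statement's English description precedes it below -/
import Mathlib

section
/- In the Lie algebra H_q, for all m,n ∈ ℤ one has q·⁅β_{m+2}, β_n⁆ − (1+q²)·⁅β_{m+1}, β_{n+1}⁆ + q·⁅β_m, β_{n+2}⁆ = 0. (This is the coefficient form of the locality relation (x₁ − qx₂)(qx₁ − x₂)[β(x₁), β(x₂)] = 0 for the generating function β(x) = Σ_{n∈ℤ} β_n x^{−n}.) -/
noncomputable section

/-- The `q`-integer `[m]_q = (q^m - q^{-m})/(q - q⁻¹)` for `m : ℤ`. -/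
def qint (q : ℂ) (m : ℤ) : ℂ := (q ^ m - q ^ (-m)) / (q - q⁻¹)

/-- The bracket of the `q`-deformed Heisenberg Lie algebra `H_q`, realized on
`(ℤ →₀ ℂ) × ℂ`: `⁅(f,a),(g,b)⁆ = (0, Σ_{m ∈ ℤ} [m]_q · f(m) · g(−m))`, so that
`⁅β_m, β_n⁆ = [m]_q δ_{m+n,0} c` with `β_m = (single m 1, 0)` and `c = (0,1)`. -/
def hqBracket (q : ℂ) (x y : (ℤ →₀ ℂ) × ℂ) : (ℤ →₀ ℂ) × ℂ :=
  (0, x.1.sum fun m fm => qint q m * fm * y.1 (-m))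

/-- The generator `β_m = (single m 1, 0)` of `H_q`. -/
def hqBeta (m : ℤ) : (ℤ →₀ ℂ) × ℂ := ((Finsupp.single m 1 : ℤ →₀ ℂ), (0 : ℂ))

/-! The bracket `⁅β_m, β_n⁆` is `[m]_q c` when `m + n = 0` and vanishes otherwise, so the
relation reduces to the three-term recurrence `[m+2]_q + [m]_q = (q + q⁻¹) [m+1]_q` of the
`q`-integers, i.e. to `q^{±2} + 1 = (q + q⁻¹) q^{±1}`. -/

theorem qint_add_two_add_qint {q : ℂ} (hq : q ≠ 0) (m : ℤ) :
    qint q (m + 2) + qint q m = (q + q⁻¹) * qint q (m + 1) := by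
  simp only [qint, neg_add, zpow_add₀ hq, zpow_neg, zpow_one]
  field_simp
  ring

theorem hqBracket_hqBeta (q : ℂ) (a b : ℤ) :
    hqBracket q (hqBeta a) (hqBeta b) = (0, if b = -a then qint q a else 0) := by
  rw [hqBracket, hqBeta, hqBeta, Finsupp.sum_single_index (by simp), mul_one,
    Finsupp.single_apply, mul_ite, mul_one, mul_zero]

theorem stmt_1_general (q : ℂ) (hq0 : q ≠ 0) (m n : ℤ) :
    q • hqBracket q (hqBeta (m + 2)) (hqBeta n)
      - (1 + q ^ 2) • hqBracket q (hqBeta (m + 1)) (hqBeta (n + 1))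
      + q • hqBracket q (hqBeta m) (hqBeta (n + 2)) = 0 := by
  simp only [hqBracket_hqBeta, Prod.smul_mk, Prod.mk_sub_mk, Prod.mk_add_mk, smul_zero,
    sub_zero, add_zero, smul_eq_mul, Prod.mk_eq_zero, true_and]
  by_cases h : n = -(m + 2)
  · rw [if_pos h, if_pos (by omega), if_pos (by omega)]
    linear_combination q * qint_add_two_add_qint hq0 m + mul_inv_cancel₀ hq0 * qint q (m + 1)
  · rw [if_neg h, if_neg (by omega), if_neg (by omega)]
    ring

/-- in `H_q`, for all `m, n ∈ ℤ`,
`q·⁅β_{m+2}, β_n⁆ − (1+q²)·⁅β_{m+1}, β_{n+1}⁆ + q·⁅β_m, β_{n+2}⁆ = 0`,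
the coefficient form of the locality relation
`(x₁ − qx₂)(qx₁ − x₂)[β(x₁), β(x₂)] = 0`. -/
theorem stmt_1 (q : ℂ) (hq0 : q ≠ 0) (hq1 : q ≠ 1) (hq2 : q ≠ -1) (m n : ℤ) :
    q • hqBracket q (hqBeta (m + 2)) (hqBeta n)
      - (1 + q ^ 2) • hqBracket q (hqBeta (m + 1)) (hqBeta (n + 1))
      + q • hqBracket q (hqBeta m) (hqBeta (n + 2)) = 0 :=
  stmt_1_general q hq0 m n
end
end

section
/- Let q ∈ ℂ be nonzero and not a root of unity, and let n ∈ ℤ. The complex function g_n(z) = q^{n+1}e^z/(1 − q^{n+1}e^z)² − q^{n−1}e^z/(1 − q^{n−1}e^z)² is defined and holomorphic on some punctured neighborhood of z = 0, and the function z ↦ g_n(z) − (δ_{n,−1} − δ_{n,1})·z^{−2} has a removable singularity at z = 0: there exists a function holomorphic in a full neighborhood of 0 agreeing with it on a punctured neighborhood of 0. Equivalently, the Laurent expansion f_n(x) of g_n at x = 0 satisfies f_n(x) = δ_{n+1,0}x^{−2} − δ_{n−1,0}x^{−2} + O(1). -/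
/-!
With `S z = 2 sinh (z / 2) / z` (`sinhHalfQuot`: analytic, even, `S 0 = 1`) one has
`e^z / (1 - e^z)^2 = 1 / (2 sinh (z / 2))^2 = 1 / (z S z)^2`, so
`e^z / (1 - e^z)^2 - 1 / z^2 = (1 - S z ^ 2) / (z^2 S z ^ 2)`, and `1 - S^2` is even and vanishes
at `0`, hence is divisible by `z^2`. So each term `c e^z / (1 - c e^z)^2` of `g_n` is analytic at
`0` except for `c = 1`, where its principal part is `1 / z^2`; as `q` is not a root of unity,
`q^(n ± 1) = 1` exactly when `n = ∓1`.
-/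

noncomputable section

open Complex

/-- The function `g_n(z) = q^{n+1}e^z/(1 − q^{n+1}e^z)² − q^{n−1}e^z/(1 − q^{n−1}e^z)²`. -/
def gFun (q : ℂ) (n : ℤ) (z : ℂ) : ℂ :=
  q ^ (n + 1) * Complex.exp z / (1 - q ^ (n + 1) * Complex.exp z) ^ 2
    - q ^ (n - 1) * Complex.exp z / (1 - q ^ (n - 1) * Complex.exp z) ^ 2

open Filter Topology

section Dslope

variable {𝕜 E : Type*} [NontriviallyNormedField 𝕜] [NormedAddCommGroup E] [NormedSpace 𝕜 E]
  {f : 𝕜 → E} {a : 𝕜}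

theorem AnalyticAt.dslope (hf : AnalyticAt 𝕜 f a) : AnalyticAt 𝕜 (dslope f a) a :=
  let ⟨_, hp⟩ := hf
  ⟨_, hp.has_fpower_series_dslope_fslope⟩

theorem AnalyticAt.exists_eq_sub_sq_smul (hf : AnalyticAt 𝕜 f a) (h₀ : f a = 0)
    (h₁ : deriv f a = 0) : ∃ g : 𝕜 → E, AnalyticAt 𝕜 g a ∧ ∀ z, f z = (z - a) ^ 2 • g z := by
  refine ⟨_root_.dslope (_root_.dslope f a) a, hf.dslope.dslope, fun z => ?_⟩
  refine (pow_sub_smul_iterate_dslope_of_zero 2 (fun k hk => ?_) z).symm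
  interval_cases k
  · exact h₀
  · simpa using h₁

theorem Function.Even.deriv_odd (hf : f.Even) : (deriv f).Odd := fun x => by
  simpa [funext hf] using deriv_comp_neg f (-x)

theorem Function.Even.deriv_zero [IsAddTorsionFree E] (hf : f.Even) : deriv f 0 = 0 :=
  hf.deriv_odd.map_zero

end Dslope

def sinhHalfQuot : ℂ → ℂ := dslope (fun z => 2 * sinh (z / 2)) 0

theorem analyticAt_sinhHalfQuot : AnalyticAt ℂ sinhHalfQuot 0 :=
  AnalyticAt.dslope (by fun_prop)

theorem sinhHalfQuot_zero : sinhHalfQuot 0 = 1 := by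
  simp [sinhHalfQuot, dslope_same]

theorem mul_sinhHalfQuot (z : ℂ) : z * sinhHalfQuot z = 2 * sinh (z / 2) := by
  simpa [sinhHalfQuot] using sub_smul_dslope (fun z => 2 * sinh (z / 2)) 0 z

theorem sinhHalfQuot_even : sinhHalfQuot.Even := fun z => by
  rcases eq_or_ne z 0 with rfl | hz
  · rw [neg_zero]
  · have h := mul_sinhHalfQuot (-z)
    rw [neg_div, sinh_neg, mul_neg, ← mul_sinhHalfQuot z] at h
    exact mul_left_cancel₀ hz (by linear_combination -h)

theorem exp_div_one_sub_exp_sq (z : ℂ) : exp z / (1 - exp z) ^ 2 = 1 / (2 * sinh (z / 2)) ^ 2 := by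
  have h : (2 * sinh (z / 2)) ^ 2 = exp (-z) * (1 - exp z) ^ 2 := by
    have e₁ : exp (z / 2) ^ 2 = exp z := by rw [← exp_nat_mul]; ring_nf
    have e₂ : exp (-(z / 2)) ^ 2 = exp (-z) := by rw [← exp_nat_mul]; ring_nf
    have e₃ : exp (z / 2) * exp (-(z / 2)) = 1 := by rw [← exp_add]; ring_nf; exact exp_zero
    have e₄ : exp (-z) * exp z = 1 := by rw [← exp_add]; ring_nf; exact exp_zero
    rw [two_sinh]
    linear_combination e₁ + e₂ - 2 * e₃ - (exp z - 2) * e₄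
  rw [h, exp_neg]
  field_simp

theorem exists_analyticAt_eq_exp_div_one_sub_exp_sq_sub_inv_sq :
    ∃ H : ℂ → ℂ, AnalyticAt ℂ H 0 ∧
      ∀ᶠ z in 𝓝[≠] 0, H z = exp z / (1 - exp z) ^ 2 - 1 / z ^ 2 := by
  have hM : (fun z => 1 - sinhHalfQuot z ^ 2).Even := fun z => by simp only [sinhHalfQuot_even z]
  have hMan : AnalyticAt ℂ (fun z => 1 - sinhHalfQuot z ^ 2) 0 :=
    analyticAt_const.sub (analyticAt_sinhHalfQuot.pow 2)
  obtain ⟨K, hK, hMK⟩ := hMan.exists_eq_sub_sq_smul (by simp [sinhHalfQuot_zero]) hM.deriv_zero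
  have hS : ∀ᶠ z in 𝓝 0, sinhHalfQuot z ≠ 0 :=
    analyticAt_sinhHalfQuot.continuousAt.eventually_ne (by simp [sinhHalfQuot_zero])
  refine ⟨fun z => K z / sinhHalfQuot z ^ 2, hK.div (analyticAt_sinhHalfQuot.pow 2)
    (by simp [sinhHalfQuot_zero]), ?_⟩
  filter_upwards [nhdsWithin_le_nhds hS, self_mem_nhdsWithin] with z hSz hz
  have hz : z ≠ 0 := hz
  rw [exp_div_one_sub_exp_sq, ← mul_sinhHalfQuot]
  have hKz : 1 - sinhHalfQuot z ^ 2 = z ^ 2 * K z := by simpa using hMK z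
  field_simp
  linear_combination -hKz

def expTerm (c z : ℂ) : ℂ := c * exp z / (1 - c * exp z) ^ 2

theorem eventually_one_sub_mul_exp_ne_zero (c : ℂ) : ∀ᶠ z in 𝓝[≠] 0, 1 - c * exp z ≠ 0 := by
  rcases eq_or_ne c 0 with rfl | hc
  · simp
  · have h : HasDerivAt (fun z => 1 - c * exp z) (-(c * exp 0)) 0 :=
      ((hasDerivAt_exp 0).const_mul c).const_sub 1
    exact h.eventually_ne (by simpa using hc)

theorem differentiableAt_expTerm {c z : ℂ} (h : 1 - c * exp z ≠ 0) :
    DifferentiableAt ℂ (expTerm c) z := by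
  unfold expTerm
  fun_prop (disch := exact pow_ne_zero 2 h)

theorem analyticAt_expTerm {c : ℂ} (hc : c ≠ 1) : AnalyticAt ℂ (expTerm c) 0 := by
  unfold expTerm
  fun_prop (disch := simpa [sub_eq_zero] using hc.symm)

theorem exists_analyticAt_eq_expTerm_sub (c : ℂ) :
    ∃ R : ℂ → ℂ, AnalyticAt ℂ R 0 ∧
      ∀ᶠ z in 𝓝[≠] 0, R z = expTerm c z - (if c = 1 then 1 else 0) / z ^ 2 := by
  split_ifs with hc
  · obtain ⟨H, hH, hHeq⟩ := exists_analyticAt_eq_exp_div_one_sub_exp_sq_sub_inv_sq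
    exact ⟨H, hH, by simpa [expTerm, hc] using hHeq⟩
  · exact ⟨expTerm c, analyticAt_expTerm hc, .of_forall fun z => by simp⟩

theorem stmt_6_general (q : ℂ) (hq : ∀ k : ℤ, k ≠ 0 → q ^ k ≠ 1) (n : ℤ) :
    ∃ ε > (0 : ℝ),
      (∀ z ∈ Metric.ball (0 : ℂ) ε \ {0},
        (1 - q ^ (n + 1) * Complex.exp z ≠ 0 ∧ 1 - q ^ (n - 1) * Complex.exp z ≠ 0) ∧
        DifferentiableAt ℂ (gFun q n) z) ∧
      ∃ F : ℂ → ℂ, AnalyticAt ℂ F 0 ∧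
        ∀ z ∈ Metric.ball (0 : ℂ) ε \ {0},
          F z = gFun q n z
            - ((if n = -1 then 1 else 0) - (if n = 1 then 1 else 0)) / z ^ 2 := by
  have hpow : ∀ k : ℤ, q ^ k = 1 ↔ k = 0 := fun k =>
    ⟨not_imp_not.mp (hq k), fun hk => by rw [hk, zpow_zero]⟩
  obtain ⟨R₁, hR₁, hev₁⟩ := exists_analyticAt_eq_expTerm_sub (q ^ (n + 1))
  obtain ⟨R₂, hR₂, hev₂⟩ := exists_analyticAt_eq_expTerm_sub (q ^ (n - 1))
  have hev : ∀ᶠ z in 𝓝[≠] 0,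
      (1 - q ^ (n + 1) * exp z ≠ 0 ∧ 1 - q ^ (n - 1) * exp z ≠ 0) ∧
        R₁ z - R₂ z = gFun q n z
          - ((if n = -1 then 1 else 0) - (if n = 1 then 1 else 0)) / z ^ 2 := by
    filter_upwards [eventually_one_sub_mul_exp_ne_zero (q ^ (n + 1)),
      eventually_one_sub_mul_exp_ne_zero (q ^ (n - 1)), hev₁, hev₂] with z h₁ h₂ e₁ e₂
    simp only [hpow, add_eq_zero_iff_eq_neg, sub_eq_zero] at e₁ e₂
    refine ⟨⟨h₁, h₂⟩, ?_⟩
    rw [e₁, e₂, gFun, expTerm, expTerm]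
    ring
  obtain ⟨ε, hε, hball⟩ := Metric.mem_nhdsWithin_iff.mp hev
  refine ⟨ε, hε, fun z hz => ⟨(hball hz).1, ?_⟩, fun z => R₁ z - R₂ z, hR₁.sub hR₂,
    fun z hz => (hball hz).2⟩
  exact (differentiableAt_expTerm (hball hz).1.1).sub (differentiableAt_expTerm (hball hz).1.2)

/-- STATEMENT 6: for `q` nonzero and not a root of unity and `n ∈ ℤ`, the function `g_n` is
defined and holomorphic on a punctured neighborhood of `z = 0`, and
`z ↦ g_n(z) − (δ_{n,−1} − δ_{n,1})·z^{−2}` has a removable singularity at `0`: there is a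
function holomorphic in a full neighborhood of `0` agreeing with it on a punctured
neighborhood of `0`.  Equivalently, `f_n(x) = δ_{n+1,0}x^{−2} − δ_{n−1,0}x^{−2} + O(1)`. -/
theorem stmt_6 (q : ℂ) (hq0 : q ≠ 0) (hq : ∀ k : ℤ, k ≠ 0 → q ^ k ≠ 1) (n : ℤ) :
    ∃ ε > (0 : ℝ),
      (∀ z ∈ Metric.ball (0 : ℂ) ε \ {0},
        (1 - q ^ (n + 1) * Complex.exp z ≠ 0 ∧ 1 - q ^ (n - 1) * Complex.exp z ≠ 0) ∧
        DifferentiableAt ℂ (gFun q n) z) ∧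
      ∃ F : ℂ → ℂ, AnalyticAt ℂ F 0 ∧
        ∀ z ∈ Metric.ball (0 : ℂ) ε \ {0},
          F z = gFun q n z
            - ((if n = -1 then 1 else 0) - (if n = 1 then 1 else 0)) / z ^ 2 :=
  stmt_6_general q hq n
end
end

section
/- Assume ℓ ∈ ℂ with ℓ ≠ 0. Then the polynomial module V is irreducible under the operators E(r,m): if A ⊆ V is a ℂ-linear subspace satisfying E(r,m)(A) ⊆ A for all r,m ∈ ℤ, then A = 0 or A = V. -/
/-!
Summing `E(j, n)` over `a ≤ j ≤ r` telescopes to `ℓ n (∂/∂x_n^{(r)} - ∂/∂x_n^{(a-1)})`, and for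
`a` small enough `∂/∂x_n^{(a-1)}` kills a given polynomial, which involves only finitely
many variables. So an invariant subspace is closed under all partial derivatives; differentiating
a nonzero element down to a nonzero constant puts `1` in it, and multiplication by the variables
then generates everything.
-/

noncomputable section

/-- The operator `E(r,m)` on `V = ℂ[x_n^{(r)} : r ∈ ℤ, n ≥ 1]` (variables indexed by
`ℤ × ℕ+`): `E(r,0) = 0`; `E(r,−n)` is multiplication by `x_n^{(r)}` for `n ≥ 1`; and
`E(r,n) = ℓ·n·(∂/∂x_n^{(r)} − ∂/∂x_n^{(r−1)})` for `n ≥ 1`. -/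
def Eop (l : ℂ) (r m : ℤ) :
    MvPolynomial (ℤ × ℕ+) ℂ →ₗ[ℂ] MvPolynomial (ℤ × ℕ+) ℂ :=
  if h : 0 < m then
    (l * (m : ℂ)) •
      ((MvPolynomial.pderiv ((r, ⟨m.toNat, by omega⟩) : ℤ × ℕ+)).toLinearMap
        - (MvPolynomial.pderiv ((r - 1, ⟨m.toNat, by omega⟩) : ℤ × ℕ+)).toLinearMap)
  else if h' : m < 0 then
    LinearMap.mulLeft ℂ (MvPolynomial.X ((r, ⟨(-m).toNat, by omega⟩) : ℤ × ℕ+))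
  else 0

open MvPolynomial

lemma Submodule.mem_of_forall_sub_sub_one_mem {R M : Type*} [Semiring R] [AddCommGroup M]
    [Module R M] (A : Submodule R M) {f : ℤ → M}
    (hf : ∀ j, f j - f (j - 1) ∈ A) {a b : ℤ} (ha : f a = 0) (hab : a ≤ b) : f b ∈ A := by
  induction b, hab using Int.leInduction with
  | base => exact ha ▸ A.zero_mem
  | succ b _ ih => simpa using A.add_mem (hf (b + 1)) ih

namespace MvPolynomial

variable {σ R : Type*}

lemma totalDegree_pderiv_add_one_le [CommSemiring R] {i : σ} {p : MvPolynomial σ R}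
    (h : pderiv i p ≠ 0) : (pderiv i p).totalDegree + 1 ≤ p.totalDegree := by
  obtain ⟨m, hm, hdeg⟩ :=
    Finset.exists_mem_eq_sup _ (support_nonempty.2 h) fun s : σ →₀ ℕ => s.sum fun _ e => e
  have hm' : m + Finsupp.single i 1 ∈ p.support := by
    rw [mem_support_iff, coeff_pderiv] at hm
    exact mem_support_iff.2 (left_ne_zero_of_mul hm)
  calc (pderiv i p).totalDegree + 1 = (m + Finsupp.single i 1).sum fun _ e => e := by
        rw [totalDegree, hdeg, Finsupp.sum_add_index' (fun _ => rfl) (fun _ _ _ => rfl),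
          Finsupp.sum_single_index rfl]
    _ ≤ p.totalDegree := le_totalDegree hm'

lemma pderiv_ne_zero_of_mem_vars [CommSemiring R] [NoZeroDivisors R] [CharZero R] {i : σ}
    {p : MvPolynomial σ R} (hi : i ∈ p.vars) : pderiv i p ≠ 0 := by
  obtain ⟨d, hd, hid⟩ := (mem_vars_iff_mem_support i).1 hi
  have hle : Finsupp.single i 1 ≤ d :=
    Finsupp.single_le_iff.2 (Nat.one_le_iff_ne_zero.2 (Finsupp.mem_support_iff.1 hid))
  intro h
  have hcoeff := coeff_pderiv (i := i) p (d - Finsupp.single i 1)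
  rw [h, coeff_zero, tsub_add_cancel_of_le hle] at hcoeff
  exact mul_ne_zero (mem_support_iff.1 hd) (Nat.cast_add_one_ne_zero _) hcoeff.symm

lemma one_mem_of_forall_pderiv_mem [Field R] [CharZero R] {A : Submodule R (MvPolynomial σ R)}
    (hA : ∀ i, ∀ p ∈ A, pderiv i p ∈ A) {p : MvPolynomial σ R} (hp : p ∈ A) (hp0 : p ≠ 0) :
    (1 : MvPolynomial σ R) ∈ A := by
  induction h : p.totalDegree using Nat.strong_induction_on generalizing p with
  | _ n ih =>
    by_cases hvars : p.vars = ∅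
    · obtain ⟨c, rfl⟩ : ∃ c, p = C c := ⟨_, vars_eq_empty_iff_eq_C.1 hvars⟩
      have hc : c ≠ 0 := fun hc => hp0 (by rw [hc, C_0])
      simpa [smul_eq_C_mul, ← C_mul, hc] using A.smul_mem c⁻¹ hp
    · obtain ⟨i, hi⟩ := Finset.nonempty_iff_ne_empty.2 hvars
      have hi0 := pderiv_ne_zero_of_mem_vars hi
      exact ih _ (h ▸ totalDegree_pderiv_add_one_le hi0) (hA i p hp) hi0 rfl

lemma eq_top_of_one_mem_of_forall_X_mul_mem [CommSemiring R]
    {A : Submodule R (MvPolynomial σ R)} (hX : ∀ i, ∀ p ∈ A, X i * p ∈ A) (h1 : 1 ∈ A) :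
    A = ⊤ := by
  refine Submodule.eq_top_iff'.2 fun q => ?_
  induction q using MvPolynomial.induction_on with
  | C a => simpa [smul_eq_C_mul] using A.smul_mem a h1
  | add p q hp hq => exact A.add_mem hp hq
  | mul_X p i hp => simpa [mul_comm] using hX i p hp

end MvPolynomial

lemma Eop_pnat (l : ℂ) (r : ℤ) (n : ℕ+) (p : MvPolynomial (ℤ × ℕ+) ℂ) :
    Eop l r n p = (l * n) • (pderiv (r, n) p - pderiv (r - 1, n) p) := by
  rw [Eop, dif_pos (by positivity), Int.cast_natCast]
  rfl

lemma Eop_neg_pnat (l : ℂ) (r : ℤ) (n : ℕ+) (p : MvPolynomial (ℤ × ℕ+) ℂ) :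
    Eop l r (-n) p = X (r, n) * p := by
  rw [Eop, dif_neg (by simp), dif_pos (by simp)]
  simp only [neg_neg, LinearMap.mulLeft_apply]
  rfl

lemma pderiv_mem_of_forall_Eop_mem {l : ℂ} (hl : l ≠ 0)
    {A : Submodule ℂ (MvPolynomial (ℤ × ℕ+) ℂ)} (hA : ∀ r m : ℤ, ∀ p ∈ A, Eop l r m p ∈ A)
    (i : ℤ × ℕ+) {p : MvPolynomial (ℤ × ℕ+) ℂ} (hp : p ∈ A) : pderiv i p ∈ A := by
  obtain ⟨r, n⟩ := i
  obtain ⟨a, har, ha⟩ := (Set.Iic_infinite r).exists_notMem_finset (p.vars.image Prod.fst)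
  have hln : l * n ≠ 0 := mul_ne_zero hl (by exact_mod_cast n.ne_zero)
  refine A.mem_of_forall_sub_sub_one_mem (f := fun j => pderiv (j, n) p) (fun j => ?_)
    (pderiv_eq_zero_of_notMem_vars fun h => ha (Finset.mem_image_of_mem _ h)) har
  have := A.smul_mem (l * n)⁻¹ (hA j n p hp)
  rwa [Eop_pnat, smul_smul, inv_mul_cancel₀ hln, one_smul] at this

/-- STATEMENT 10: for `ℓ ≠ 0`, the polynomial module `V` is irreducible under the operators
`E(r,m)`: every subspace invariant under all `E(r,m)` is `0` or `V`. -/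
theorem stmt_10 (l : ℂ) (hl : l ≠ 0)
    (A : Submodule ℂ (MvPolynomial (ℤ × ℕ+) ℂ))
    (hA : ∀ r m : ℤ, ∀ p ∈ A, Eop l r m p ∈ A) :
    A = ⊥ ∨ A = ⊤ := by
  refine or_iff_not_imp_left.2 fun hbot => ?_
  obtain ⟨p, hp, hp0⟩ := (Submodule.ne_bot_iff A).1 hbot
  have hX : ∀ i, ∀ q ∈ A, X i * q ∈ A := fun i q hq => Eop_neg_pnat l i.1 i.2 q ▸ hA _ _ q hq
  exact eq_top_of_one_mem_of_forall_X_mul_mem hX <|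
    one_mem_of_forall_pderiv_mem (fun i _ hq => pderiv_mem_of_forall_Eop_mem hl hA i hq) hp hp0
end
end
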